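/- arXiv:1901.08905 — 12 statements merged into one kernel-verified Lean document; each statement's English description precedes it below -/
import Mathlib

section
/- Let h, b ∈ ℝ³ be unit vectors with b ≠ h and b ≠ −h. Let c = √((1 + ⟪b,h⟫)/2) and s = √((1 − ⟪b,h⟫)/2). Then the unit quaternion r₁ = (c, s·(b × h)/‖b × h‖) satisfies the vector-measurement constraint r₁ ⊗ b̌ = ȟ ⊗ r₁, where b̌ and ȟ denote the pure quaternions with vector parts b and h. -/
/-!
Write d = ⟪b, h⟫ and u = b × h. For unit b, h one has u × b + u × h = (1 + d)(h - b) and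
⟪u, b⟫ = ⟪u, h⟫ = 0, so for every scalar k the quaternion q = (c, k u) satisfies
q ⊗ b̌ - ȟ ⊗ q = (0, (c - k (1 + d)) (b - h)). It therefore suffices that c = k (1 + d) for
k = s / ‖u‖, which is the half-angle identity ‖u‖ = √(1 - d²) = 2 c s; it needs -1 < d < 1,
that is, b ≠ ±h.
-/

open Real

lemma sum_three_sq_pos {x y z : ℝ} (h : ¬(x = 0 ∧ y = 0 ∧ z = 0)) : 0 < x ^ 2 + y ^ 2 + z ^ 2 := by
  by_contra! hle
  exact h ⟨by nlinarith [sq_nonneg y, sq_nonneg z], by nlinarith [sq_nonneg x, sq_nonneg z],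
    by nlinarith [sq_nonneg x, sq_nonneg y]⟩

section UnitVectors

variable {b₁ b₂ b₃ h₁ h₂ h₃ : ℝ}

lemma inner_lt_one_of_ne (hb : b₁ ^ 2 + b₂ ^ 2 + b₃ ^ 2 = 1) (hh : h₁ ^ 2 + h₂ ^ 2 + h₃ ^ 2 = 1)
    (hne : ¬(b₁ = h₁ ∧ b₂ = h₂ ∧ b₃ = h₃)) : b₁ * h₁ + b₂ * h₂ + b₃ * h₃ < 1 := by
  have := sum_three_sq_pos (x := b₁ - h₁) (y := b₂ - h₂) (z := b₃ - h₃)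
    (by simpa only [sub_eq_zero] using hne)
  nlinarith

lemma neg_one_lt_inner_of_ne_neg (hb : b₁ ^ 2 + b₂ ^ 2 + b₃ ^ 2 = 1)
    (hh : h₁ ^ 2 + h₂ ^ 2 + h₃ ^ 2 = 1) (hne : ¬(b₁ = -h₁ ∧ b₂ = -h₂ ∧ b₃ = -h₃)) :
    -1 < b₁ * h₁ + b₂ * h₂ + b₃ * h₃ := by
  have := sum_three_sq_pos (x := b₁ + h₁) (y := b₂ + h₂) (z := b₃ + h₃)
    (by simpa only [add_eq_zero_iff_eq_neg] using hne)
  nlinarith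

end UnitVectors

lemma sqrt_half_one_add_eq {d : ℝ} (hd₁ : -1 < d) (hd₂ : d < 1) :
    √((1 + d) / 2) = √((1 - d) / 2) / √(1 - d ^ 2) * (1 + d) := by
  set c := √((1 + d) / 2)
  set s := √((1 - d) / 2)
  have hc : c ^ 2 = (1 + d) / 2 := sq_sqrt (by linarith)
  have hs : s ^ 2 = (1 - d) / 2 := sq_sqrt (by linarith)
  have hc0 : 0 < c := sqrt_pos.2 (by linarith)
  have hs0 : 0 < s := sqrt_pos.2 (by linarith)
  have hν : √(1 - d ^ 2) = 2 * c * s := by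
    rw [← sqrt_sq (by positivity : 0 ≤ 2 * c * s)]
    congr 1
    linear_combination (-4 * s ^ 2) * hc - (2 + 2 * d) * hs
  rw [hν]
  field_simp
  linear_combination 2 * hc

theorem cross_rotor_mul_pure_eq_pure_mul {R : Type*} [CommRing R] {b₁ b₂ b₃ h₁ h₂ h₃ c k : R}
    (hb : b₁ ^ 2 + b₂ ^ 2 + b₃ ^ 2 = 1) (hh : h₁ ^ 2 + h₂ ^ 2 + h₃ ^ 2 = 1)
    (hck : c = k * (1 + (b₁ * h₁ + b₂ * h₂ + b₃ * h₃))) :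
    (⟨c, k * (b₂ * h₃ - b₃ * h₂), k * (b₃ * h₁ - b₁ * h₃), k * (b₁ * h₂ - b₂ * h₁)⟩ :
        Quaternion R) * ⟨0, b₁, b₂, b₃⟩ =
      ⟨0, h₁, h₂, h₃⟩ *
        ⟨c, k * (b₂ * h₃ - b₃ * h₂), k * (b₃ * h₁ - b₁ * h₃), k * (b₁ * h₂ - b₂ * h₁)⟩ := by
  rw [QuaternionAlgebra.mk_mul_mk, QuaternionAlgebra.mk_mul_mk, QuaternionAlgebra.mk.injEq]
  refine ⟨by ring, ?_, ?_, ?_⟩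
  · linear_combination (b₁ - h₁) * hck + k * h₁ * hb - k * b₁ * hh
  · linear_combination (b₂ - h₂) * hck + k * h₂ * hb - k * b₂ * hh
  · linear_combination (b₃ - h₃) * hck + k * h₃ * hb - k * b₃ * hh

theorem stmt2 (h₁ h₂ h₃ b₁ b₂ b₃ : ℝ)
    (hh : h₁^2 + h₂^2 + h₃^2 = 1) (hb : b₁^2 + b₂^2 + b₃^2 = 1)
    (hne : ¬ (b₁ = h₁ ∧ b₂ = h₂ ∧ b₃ = h₃))
    (hne' : ¬ (b₁ = -h₁ ∧ b₂ = -h₂ ∧ b₃ = -h₃))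
    (c s u₁ u₂ u₃ nu : ℝ)
    (hc : c = sqrt ((1 + (b₁*h₁ + b₂*h₂ + b₃*h₃))/2))
    (hs : s = sqrt ((1 - (b₁*h₁ + b₂*h₂ + b₃*h₃))/2))
    (hu₁ : u₁ = b₂*h₃ - b₃*h₂) (hu₂ : u₂ = b₃*h₁ - b₁*h₃) (hu₃ : u₃ = b₁*h₂ - b₂*h₁)
    (hnu : nu = sqrt (u₁^2 + u₂^2 + u₃^2))
    (r₁ bc hc' : Quaternion ℝ)
    (hr₁ : r₁ = ⟨c, s * u₁ / nu, s * u₂ / nu, s * u₃ / nu⟩)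
    (hbc : bc = ⟨0, b₁, b₂, b₃⟩) (hhc : hc' = ⟨0, h₁, h₂, h₃⟩) :
    r₁ * bc = hc' * r₁ := by
  have hlagrange : u₁ ^ 2 + u₂ ^ 2 + u₃ ^ 2 = 1 - (b₁*h₁ + b₂*h₂ + b₃*h₃) ^ 2 := by
    rw [hu₁, hu₂, hu₃]
    linear_combination (h₁ ^ 2 + h₂ ^ 2 + h₃ ^ 2) * hb + hh
  subst hr₁ hbc hhc hu₁ hu₂ hu₃
  simp only [mul_div_right_comm s]
  refine cross_rotor_mul_pure_eq_pure_mul hb hh ?_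
  rw [hc, hs, hnu, hlagrange]
  exact sqrt_half_one_add_eq (neg_one_lt_inner_of_ne_neg hb hh hne') (inner_lt_one_of_ne hb hh hne)
end

section
/- Let h, b ∈ ℝ³ be unit vectors, and let p, q be unit quaternions both satisfying the constraint x ⊗ b̌ = ȟ ⊗ x. Then p ⊗ q⁻¹ is a rotation about h: there exist real c, s with c² + s² = 1 such that p ⊗ q⁻¹ = (c, s·h). -/
/-!
Conjugating the constraint for `q` by `star` (both `b̌` and `ȟ` are pure, so `star` negates them)
gives `q⁻¹ ȟ = b̌ q⁻¹`; combined with `p b̌ = ȟ p` this shows that `p q⁻¹` commutes with `ȟ`.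
A quaternion commutes with `ȟ` exactly when its vector part is parallel to `h`, and `p q⁻¹` has
norm one, which yields `c² + s² = 1`.
-/

theorem star_mul_eq_mul_star_of_mul_eq_mul {A : Type*} [Ring A] [StarRing A] {q b h : A}
    (hb : star b = -b) (hh : star h = -h) (hq : q * b = h * q) :
    star q * h = b * star q := by
  have := congrArg star hq
  rw [star_mul, star_mul, hb, hh, neg_mul, mul_neg, neg_inj] at this
  exact this.symm

theorem commute_mul_star_of_mul_eq_mul {A : Type*} [Ring A] [StarRing A] {p q b h : A}
    (hb : star b = -b) (hh : star h = -h) (hp : p * b = h * p) (hq : q * b = h * q) :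
    Commute (p * star q) h := by
  rw [Commute, SemiconjBy, mul_assoc, star_mul_eq_mul_star_of_mul_eq_mul hb hh hq,
    ← mul_assoc, hp, mul_assoc]

namespace Quaternion

theorem normSq_eq_re_sq_add_normSq_im {R : Type*} [CommRing R] (a : ℍ[R]) :
    normSq a = a.re ^ 2 + normSq a.im := by
  simp only [normSq_def', re_im, imI_im, imJ_im, imK_im]
  ring

theorem exists_im_eq_smul_of_commute {R : Type*} [Field R] [NeZero (2 : R)] {r h : ℍ[R]}
    (hre : h.re = 0) (hnorm : normSq h = 1) (hr : Commute r h) :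
    ∃ s : R, r.im = s • h := by
  have hr := hr.eq
  rw [Quaternion.ext_iff] at hr
  obtain ⟨-, e₁, e₂, e₃⟩ := hr
  simp only [imI_mul, imJ_mul, imK_mul, hre] at e₁ e₂ e₃
  rw [normSq_def', hre] at hnorm
  have two : (2 : R) ≠ 0 := two_ne_zero
  -- `r h - h r = 2 (im r × im h)`, so the commutation says the cross product vanishes
  have c₁₂ : r.imI * h.imJ = r.imJ * h.imI := mul_left_cancel₀ two (by linear_combination e₃)
  have c₁₃ : r.imI * h.imK = r.imK * h.imI := mul_left_cancel₀ two (by linear_combination -e₂)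
  have c₂₃ : r.imJ * h.imK = r.imK * h.imJ := mul_left_cancel₀ two (by linear_combination e₁)
  refine ⟨r.imI * h.imI + r.imJ * h.imJ + r.imK * h.imK, ?_⟩
  ext
  · simp [hre]
  · simp only [imI_im, imI_smul, smul_eq_mul]
    linear_combination -r.imI * hnorm + h.imJ * c₁₂ + h.imK * c₁₃
  · simp only [imJ_im, imJ_smul, smul_eq_mul]
    linear_combination -r.imJ * hnorm - h.imI * c₁₂ + h.imK * c₂₃
  · simp only [imK_im, imK_smul, smul_eq_mul]
    linear_combination -r.imK * hnorm - h.imI * c₁₃ - h.imJ * c₂₃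

end Quaternion

theorem stmt5_general (h₁ h₂ h₃ b₁ b₂ b₃ : ℝ)
    (hh : h₁^2 + h₂^2 + h₃^2 = 1)
    (bc hc' : Quaternion ℝ)
    (hbc : bc = ⟨0, b₁, b₂, b₃⟩) (hhc : hc' = ⟨0, h₁, h₂, h₃⟩)
    (p q : Quaternion ℝ) (hp : ‖p‖ = 1) (hq : ‖q‖ = 1)
    (hpc : p * bc = hc' * p)
    (hqc : q * bc = hc' * q) :
    ∃ c s : ℝ, c^2 + s^2 = 1 ∧
      p * star q = (⟨c, s * h₁, s * h₂, s * h₃⟩ : Quaternion ℝ) := by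
  obtain ⟨hre, hI, hJ, hK⟩ : hc'.re = 0 ∧ hc'.imI = h₁ ∧ hc'.imJ = h₂ ∧ hc'.imK = h₃ := by
    subst hhc; exact ⟨rfl, rfl, rfl, rfl⟩
  have hnorm : Quaternion.normSq hc' = 1 := by
    rw [Quaternion.normSq_def', hre, hI, hJ, hK]
    linear_combination hh
  have hcomm := commute_mul_star_of_mul_eq_mul (Quaternion.star_eq_neg.2 (by rw [hbc]))
    (Quaternion.star_eq_neg.2 hre) hpc hqc
  obtain ⟨s, hs⟩ := Quaternion.exists_im_eq_smul_of_commute hre hnorm hcomm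
  refine ⟨(p * star q).re, s, ?_, ?_⟩
  · have hunit : Quaternion.normSq (p * star q) = 1 := by
      rw [Quaternion.normSq_eq_norm_mul_self, norm_mul, Quaternion.norm_star, hp, hq, one_mul,
        one_mul]
    rwa [Quaternion.normSq_eq_re_sq_add_normSq_im, hs, Quaternion.normSq_smul, hnorm,
      mul_one] at hunit
  · rw [← Quaternion.re_add_im (p * star q), hs]
    ext <;> simp [hre, hI, hJ, hK]

theorem stmt5 (h₁ h₂ h₃ b₁ b₂ b₃ : ℝ)
    (hh : h₁^2 + h₂^2 + h₃^2 = 1) (hb : b₁^2 + b₂^2 + b₃^2 = 1)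
    (bc hc' : Quaternion ℝ)
    (hbc : bc = ⟨0, b₁, b₂, b₃⟩) (hhc : hc' = ⟨0, h₁, h₂, h₃⟩)
    (p q : Quaternion ℝ) (hp : ‖p‖ = 1) (hq : ‖q‖ = 1)
    (hpc : p * bc = hc' * p)
    (hqc : q * bc = hc' * q) :
    ∃ c s : ℝ, c^2 + s^2 = 1 ∧
      p * star q = (⟨c, s * h₁, s * h₂, s * h₃⟩ : Quaternion ℝ) :=
  stmt5_general h₁ h₂ h₃ b₁ b₂ b₃ hh bc hc' hbc hhc p q hp hq hpc hqc
end

section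
/- Let h, b ∈ ℝ³ be unit vectors with b ≠ ±h, let c = √((1+⟪b,h⟫)/2), s = √((1−⟪b,h⟫)/2), r₁ = (c, s·(b×h)/‖b×h‖), r₂ = (0, (b+h)/‖b+h‖). Then for any reals c', s' with c'² + s'² = 1, the quaternion q = c'·r₁ + s'·r₂ is a unit quaternion satisfying q ⊗ b̌ = ȟ ⊗ q. That is, every norm-constrained linear combination of the two special solutions lies in the feasibility cone. -/
/-!
The solutions `p` of `p * x = y * p` form a real subspace which is closed under right
multiplication by `x`. For pure quaternions `b̌`, `ȟ` of the same norm we have `b̌² = ȟ²`, so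
`b̌ + ȟ` is a solution, and hence so is `(b̌ + ȟ) * b̌ = -(1 + ⟪b, h⟫, b × h)`. Now `r₂` is a
multiple of the first and, by the half-angle identity `c ‖b × h‖ = s (1 + ⟪b, h⟫)`, `r₁` is a
multiple of the second. Finally `r₁ ⊥ r₂` because `⟪p * x, p⟫ = ‖p‖² Re x`, so Pythagoras gives
`‖c' r₁ + s' r₂‖ = 1`.
-/

open Real Quaternion RealInnerProductSpace

section Intertwiners

variable (R : Type*) {A : Type*} [CommSemiring R] [Semiring A] [Algebra R A]

def intertwiners (x y : A) : Submodule R A where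
  carrier := {p | p * x = y * p}
  add_mem' {p p'} hp hp' := by
    simp only [Set.mem_ofPred_eq] at *
    rw [add_mul, mul_add, hp, hp']
  zero_mem' := by simp
  smul_mem' r p hp := by
    simp only [Set.mem_ofPred_eq] at *
    rw [smul_mul_assoc, mul_smul_comm, hp]

variable {R}

theorem mem_intertwiners {x y p : A} : p ∈ intertwiners R x y ↔ p * x = y * p := Iff.rfl

theorem mul_right_mem_intertwiners {x y p : A} (hp : p ∈ intertwiners R x y) :
    p * x ∈ intertwiners R x y := by
  rw [mem_intertwiners] at hp ⊢
  rw [← mul_assoc, ← hp]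

theorem add_mem_intertwiners_of_mul_self_eq {x y : A} (h : x * x = y * y) :
    x + y ∈ intertwiners R x y := by
  rw [mem_intertwiners, add_mul, mul_add, h, add_comm]

end Intertwiners

theorem norm_smul_add_smul_eq_one {E : Type*} [NormedAddCommGroup E] [InnerProductSpace ℝ E]
    {x y : E} (hx : ‖x‖ = 1) (hy : ‖y‖ = 1) (hxy : ⟪x, y⟫ = 0) {a b : ℝ}
    (hab : a ^ 2 + b ^ 2 = 1) : ‖a • x + b • y‖ = 1 := by
  have horth : ⟪a • x, b • y⟫ = 0 := by simp [inner_smul_left, inner_smul_right, hxy]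
  rw [← pow_left_inj₀ (norm_nonneg _) zero_le_one two_ne_zero,
    norm_add_sq_real, horth, norm_smul, norm_smul, hx, hy]
  simpa [mul_pow] using hab

theorem dot_lt_one_of_ne {b₁ b₂ b₃ h₁ h₂ h₃ : ℝ}
    (hh : h₁ ^ 2 + h₂ ^ 2 + h₃ ^ 2 = 1) (hb : b₁ ^ 2 + b₂ ^ 2 + b₃ ^ 2 = 1)
    (hne : ¬ (b₁ = h₁ ∧ b₂ = h₂ ∧ b₃ = h₃)) :
    b₁ * h₁ + b₂ * h₂ + b₃ * h₃ < 1 := by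
  by_contra! hle
  have e₁ : (b₁ - h₁) ^ 2 = 0 := by nlinarith [sq_nonneg (b₂ - h₂), sq_nonneg (b₃ - h₃)]
  have e₂ : (b₂ - h₂) ^ 2 = 0 := by nlinarith [sq_nonneg (b₁ - h₁), sq_nonneg (b₃ - h₃)]
  have e₃ : (b₃ - h₃) ^ 2 = 0 := by nlinarith [sq_nonneg (b₁ - h₁), sq_nonneg (b₂ - h₂)]
  exact hne ⟨by nlinarith, by nlinarith, by nlinarith⟩

theorem sqrt_half_add_mul_sqrt_one_sub_sq {d : ℝ} (h₁ : -1 ≤ d) (h₂ : d ≤ 1) :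
    √((1 + d) / 2) * √(1 - d ^ 2) = √((1 - d) / 2) * (1 + d) := by
  rw [← sq_eq_sq₀ (by positivity) (mul_nonneg (sqrt_nonneg _) (by linarith)), mul_pow, mul_pow,
    sq_sqrt (by linarith), sq_sqrt (by nlinarith), sq_sqrt (by linarith)]
  ring

namespace Quaternion

theorem mul_self_eq_mul_self {R : Type*} [CommRing R] [LinearOrder R] [IsStrictOrderedRing R]
    {x y : ℍ[R]} (hx : x.re = 0) (hy : y.re = 0) (h : normSq x = normSq y) : x * x = y * y := by
  rw [← sq, ← sq, sq_eq_neg_normSq.mpr hx, sq_eq_neg_normSq.mpr hy, h]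

theorem inner_mul_self_left (p x : ℍ) : ⟪p * x, p⟫ = normSq p * x.re := by
  simp [inner_def, normSq_def']
  ring

theorem add_mem_intertwiners_of_eq_mk {b h : ℍ} {b₁ b₂ b₃ h₁ h₂ h₃ : ℝ}
    (hb : b = ⟨0, b₁, b₂, b₃⟩) (hh : h = ⟨0, h₁, h₂, h₃⟩)
    (hnorm : b₁ ^ 2 + b₂ ^ 2 + b₃ ^ 2 = h₁ ^ 2 + h₂ ^ 2 + h₃ ^ 2) :
    b + h ∈ intertwiners ℝ b h := by
  refine add_mem_intertwiners_of_mul_self_eq (mul_self_eq_mul_self ?_ ?_ ?_)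
  · rw [hb]
  · rw [hh]
  · rw [normSq_def', normSq_def', hb, hh]
    simpa using hnorm

theorem norm_eq_one_of_eq_mk {q : ℍ} {a t x y z n : ℝ}
    (hq : q = ⟨a, t * x / n, t * y / n, t * z / n⟩)
    (hn : n ^ 2 = x ^ 2 + y ^ 2 + z ^ 2) (hn0 : n ≠ 0) (h : a ^ 2 + t ^ 2 = 1) : ‖q‖ = 1 := by
  have hq1 : normSq q = 1 := by
    rw [normSq_def', hq]
    field_simp
    linear_combination n ^ 2 * h - t ^ 2 * hn
  rw [norm_eq_sqrt_real_inner, inner_self, hq1, sqrt_one]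

theorem eq_inv_smul_add_of_eq_mk {q b h : ℍ} {b₁ b₂ b₃ h₁ h₂ h₃ n : ℝ}
    (hq : q = ⟨0, (b₁ + h₁) / n, (b₂ + h₂) / n, (b₃ + h₃) / n⟩)
    (hb : b = ⟨0, b₁, b₂, b₃⟩) (hh : h = ⟨0, h₁, h₂, h₃⟩) :
    q = n⁻¹ • (b + h) := by
  ext <;> simp only [re_smul, imI_smul, imJ_smul, imK_smul, re_add, imI_add, imJ_add, imK_add] <;>
    simp [hq, hb, hh, div_eq_inv_mul]

theorem eq_smul_mul_of_eq_mk_cross {q b h : ℍ} {b₁ b₂ b₃ h₁ h₂ h₃ c s n : ℝ}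
    (hq : q = ⟨c, s * (b₂ * h₃ - b₃ * h₂) / n, s * (b₃ * h₁ - b₁ * h₃) / n,
      s * (b₁ * h₂ - b₂ * h₁) / n⟩)
    (hb : b = ⟨0, b₁, b₂, b₃⟩) (hh : h = ⟨0, h₁, h₂, h₃⟩) (hb1 : b₁ ^ 2 + b₂ ^ 2 + b₃ ^ 2 = 1)
    (hn : n ≠ 0) (hkey : c * n = s * (1 + (b₁ * h₁ + b₂ * h₂ + b₃ * h₃))) :
    q = -(s / n) • ((b + h) * b) := by
  ext <;> simp only [re_smul, imI_smul, imJ_smul, imK_smul, re_mul, imI_mul, imJ_mul, imK_mul,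
    re_add, imI_add, imJ_add, imK_add] <;> simp [hq, hb, hh] <;> field_simp
  · linear_combination hkey - s * hb1
  all_goals ring

end Quaternion

theorem stmt6 (h₁ h₂ h₃ b₁ b₂ b₃ : ℝ)
    (hh : h₁^2 + h₂^2 + h₃^2 = 1) (hb : b₁^2 + b₂^2 + b₃^2 = 1)
    (hne : ¬ (b₁ = h₁ ∧ b₂ = h₂ ∧ b₃ = h₃))
    (hne' : ¬ (b₁ = -h₁ ∧ b₂ = -h₂ ∧ b₃ = -h₃))
    (c s u₁ u₂ u₃ nu ng : ℝ)
    (hc : c = sqrt ((1 + (b₁*h₁ + b₂*h₂ + b₃*h₃))/2))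
    (hs : s = sqrt ((1 - (b₁*h₁ + b₂*h₂ + b₃*h₃))/2))
    (hu₁ : u₁ = b₂*h₃ - b₃*h₂) (hu₂ : u₂ = b₃*h₁ - b₁*h₃) (hu₃ : u₃ = b₁*h₂ - b₂*h₁)
    (hnu : nu = sqrt (u₁^2 + u₂^2 + u₃^2))
    (hng : ng = sqrt ((b₁+h₁)^2 + (b₂+h₂)^2 + (b₃+h₃)^2))
    (r₁ r₂ bc hc' : Quaternion ℝ)
    (hr₁ : r₁ = ⟨c, s * u₁ / nu, s * u₂ / nu, s * u₃ / nu⟩)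
    (hr₂ : r₂ = ⟨0, (b₁+h₁)/ng, (b₂+h₂)/ng, (b₃+h₃)/ng⟩)
    (hbc : bc = ⟨0, b₁, b₂, b₃⟩) (hhc : hc' = ⟨0, h₁, h₂, h₃⟩)
    (c' s' : ℝ) (hcs : c'^2 + s'^2 = 1)
    (q : Quaternion ℝ) (hqdef : q = c' • r₁ + s' • r₂) :
    ‖q‖ = 1 ∧ q * bc = hc' * q := by
  set d := b₁*h₁ + b₂*h₂ + b₃*h₃
  have hd_lt : d < 1 := dot_lt_one_of_ne hh hb hne
  have hd_gt : -1 < d := by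
    have hh' : (-h₁) ^ 2 + (-h₂) ^ 2 + (-h₃) ^ 2 = 1 := by linear_combination hh
    linarith [dot_lt_one_of_ne hh' hb hne']
  have hnu_sq : nu ^ 2 = u₁^2 + u₂^2 + u₃^2 := by rw [hnu, sq_sqrt (by positivity)]
  have hng_sq : ng ^ 2 = (b₁+h₁)^2 + (b₂+h₂)^2 + (b₃+h₃)^2 := by rw [hng, sq_sqrt (by positivity)]
  subst hu₁ hu₂ hu₃
  have hnu0 : nu ≠ 0 := by rintro rfl; nlinarith
  have hng0 : ng ≠ 0 := by rintro rfl; nlinarith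
  have hkey : c * nu = s * (1 + d) := by
    rw [hc, hs, hnu, ← sqrt_half_add_mul_sqrt_one_sub_sq hd_gt.le hd_lt.le]
    congr 2
    linear_combination (h₁^2 + h₂^2 + h₃^2) * hb + hh
  have hcs_sq : c ^ 2 + s ^ 2 = 1 := by
    rw [hc, hs, sq_sqrt (by linarith), sq_sqrt (by linarith)]; ring
  have hr₁' := eq_smul_mul_of_eq_mk_cross hr₁ hbc hhc hb hnu0 hkey
  have hr₂' := eq_inv_smul_add_of_eq_mk hr₂ hbc hhc
  have hV := add_mem_intertwiners_of_eq_mk hbc hhc (hb.trans hh.symm)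
  have horth : ⟪r₁, r₂⟫ = 0 := by
    rw [hr₁', hr₂', inner_smul_left, inner_smul_right, inner_mul_self_left, hbc]
    simp
  refine ⟨?_, ?_⟩
  · rw [hqdef]
    refine norm_smul_add_smul_eq_one (norm_eq_one_of_eq_mk hr₁ hnu_sq hnu0 hcs_sq) ?_ horth hcs
    exact norm_eq_one_of_eq_mk (a := 0) (t := 1) (by simpa using hr₂) hng_sq hng0 (by norm_num)
  · rw [← mem_intertwiners (R := ℝ), hqdef, hr₁', hr₂']
    exact add_mem (Submodule.smul_mem _ _ (Submodule.smul_mem _ _ (mul_right_mem_intertwiners hV)))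
      (Submodule.smul_mem _ _ (Submodule.smul_mem _ _ hV))
end

section
/- With the notation of the two special solutions r₁ = (c, s·(b×h)/‖b×h‖) and r₂ = (0, (b+h)/‖b+h‖) for unit vectors b, h ∈ ℝ³ with b ≠ ±h (c = √((1+⟪b,h⟫)/2), s = √((1−⟪b,h⟫)/2)): r₁ and r₂ are orthogonal unit quaternions, i.e., ⟪r₁, r₂⟫ = 0 and ‖r₁‖ = ‖r₂‖ = 1, where the inner product is the Euclidean inner product on the four components. -/
/-!
Write `b`, `h` as vectors of `ℝ³` and `d = b ⬝ h`. For unit vectors, Lagrange's identity gives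
`‖b × h‖² = (1 - d)(1 + d)`, and `b ≠ ±h` forces `-1 < d < 1`, so `b × h` and `b + h` are
nonzero and the normalisations defining `r₁`, `r₂` are genuine. Then `‖r₁‖² = c² + s² = 1`,
`r₂` is a normalised vector, and `⟪r₁, r₂⟫` is a multiple of `(b × h) ⬝ (b + h) = 0`.
-/

open Real

open Matrix

theorem vec3_dotProduct_self {R : Type*} [CommRing R] (x y z : R) :
    ![x, y, z] ⬝ᵥ ![x, y, z] = x ^ 2 + y ^ 2 + z ^ 2 := by
  rw [vec3_dotProduct']; ring

section OrderedRing

variable {R : Type*} [CommRing R] [LinearOrder R] [IsStrictOrderedRing R]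

section

variable {ι : Type*} [Fintype ι] {b h : ι → R}

theorem dotProduct_self_pos_of_ne_zero {v : ι → R} (hv : v ≠ 0) : 0 < v ⬝ᵥ v :=
  (Finset.sum_nonneg fun i _ => mul_self_nonneg (v i)).lt_of_ne
    (Ne.symm (dotProduct_self_eq_zero.not.2 hv))

theorem dotProduct_lt_one_of_ne (hb : b ⬝ᵥ b = 1) (hh : h ⬝ᵥ h = 1) (hne : b ≠ h) :
    b ⬝ᵥ h < 1 := by
  have hpos := dotProduct_self_pos_of_ne_zero (sub_ne_zero.2 hne)
  rw [sub_dotProduct, dotProduct_sub, dotProduct_sub, hb, hh, dotProduct_comm h b] at hpos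
  linarith

theorem neg_one_lt_dotProduct_of_ne_neg (hb : b ⬝ᵥ b = 1) (hh : h ⬝ᵥ h = 1) (hne : b ≠ -h) :
    -1 < b ⬝ᵥ h := by
  have := dotProduct_lt_one_of_ne hb (by rwa [neg_dotProduct_neg]) hne
  rw [dotProduct_neg] at this
  linarith

end

theorem cross_dot_cross_self_pos {b h : Fin 3 → R} (hb : b ⬝ᵥ b = 1) (hh : h ⬝ᵥ h = 1)
    (hne : b ≠ h) (hne' : b ≠ -h) : 0 < b ⨯₃ h ⬝ᵥ b ⨯₃ h := by
  rw [cross_dot_cross, hb, hh, dotProduct_comm h b]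
  nlinarith [dotProduct_lt_one_of_ne hb hh hne, neg_one_lt_dotProduct_of_ne_neg hb hh hne']

end OrderedRing

theorem cross_dot_add {R : Type*} [CommRing R] (b h : Fin 3 → R) : b ⨯₃ h ⬝ᵥ (b + h) = 0 := by
  rw [dotProduct_add, dotProduct_comm, dot_self_cross, dotProduct_comm, dot_cross_self, add_zero]

theorem sq_div_sqrt_add_sq_div_sqrt_add_sq_div_sqrt {x y z : ℝ}
    (hpos : 0 < x ^ 2 + y ^ 2 + z ^ 2) :
    (x / √(x ^ 2 + y ^ 2 + z ^ 2)) ^ 2 + (y / √(x ^ 2 + y ^ 2 + z ^ 2)) ^ 2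
      + (z / √(x ^ 2 + y ^ 2 + z ^ 2)) ^ 2 = 1 := by
  simp only [div_pow, sq_sqrt hpos.le]
  field_simp

theorem sqrt_half_one_add_sq_add_sqrt_half_one_sub_sq {d : ℝ} (h₁ : -1 ≤ d) (h₂ : d ≤ 1) :
    √((1 + d) / 2) ^ 2 + √((1 - d) / 2) ^ 2 = 1 := by
  rw [sq_sqrt (by linarith), sq_sqrt (by linarith)]; ring

theorem Quaternion.norm_eq_one_of_sq_add {q : Quaternion ℝ}
    (hq : q.re ^ 2 + q.imI ^ 2 + q.imJ ^ 2 + q.imK ^ 2 = 1) : ‖q‖ = 1 := by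
  rw [norm_eq_sqrt_real_inner, Quaternion.inner_self, Quaternion.normSq_def', hq, sqrt_one]

theorem stmt7 (h₁ h₂ h₃ b₁ b₂ b₃ : ℝ)
    (hh : h₁^2 + h₂^2 + h₃^2 = 1) (hb : b₁^2 + b₂^2 + b₃^2 = 1)
    (hne : ¬ (b₁ = h₁ ∧ b₂ = h₂ ∧ b₃ = h₃))
    (hne' : ¬ (b₁ = -h₁ ∧ b₂ = -h₂ ∧ b₃ = -h₃))
    (c s u₁ u₂ u₃ nu ng : ℝ)
    (hc : c = sqrt ((1 + (b₁*h₁ + b₂*h₂ + b₃*h₃))/2))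
    (hs : s = sqrt ((1 - (b₁*h₁ + b₂*h₂ + b₃*h₃))/2))
    (hu₁ : u₁ = b₂*h₃ - b₃*h₂) (hu₂ : u₂ = b₃*h₁ - b₁*h₃) (hu₃ : u₃ = b₁*h₂ - b₂*h₁)
    (hnu : nu = sqrt (u₁^2 + u₂^2 + u₃^2))
    (hng : ng = sqrt ((b₁+h₁)^2 + (b₂+h₂)^2 + (b₃+h₃)^2))
    (r₁ r₂ : Quaternion ℝ)
    (hr₁ : r₁ = ⟨c, s * u₁ / nu, s * u₂ / nu, s * u₃ / nu⟩)
    (hr₂ : r₂ = ⟨0, (b₁+h₁)/ng, (b₂+h₂)/ng, (b₃+h₃)/ng⟩) :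
    r₁.re * r₂.re + r₁.imI * r₂.imI + r₁.imJ * r₂.imJ + r₁.imK * r₂.imK = 0 ∧
      ‖r₁‖ = 1 ∧ ‖r₂‖ = 1 := by
  set b : Fin 3 → ℝ := ![b₁, b₂, b₃]
  set h : Fin 3 → ℝ := ![h₁, h₂, h₃]
  have hbb : b ⬝ᵥ b = 1 := by rw [vec3_dotProduct_self, hb]
  have hhh : h ⬝ᵥ h = 1 := by rw [vec3_dotProduct_self, hh]
  have hb_ne_h : b ≠ h := fun e => hne ⟨congrFun e 0, congrFun e 1, congrFun e 2⟩
  have hb_ne_neg_h : b ≠ -h := fun e => hne' ⟨congrFun e 0, congrFun e 1, congrFun e 2⟩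
  have hcross : b ⨯₃ h = ![u₁, u₂, u₃] := by rw [cross_apply, hu₁, hu₂, hu₃]; rfl
  have hsum : b + h = ![b₁ + h₁, b₂ + h₂, b₃ + h₃] := by ext i; fin_cases i <;> rfl
  have hu_pos : 0 < u₁ ^ 2 + u₂ ^ 2 + u₃ ^ 2 := by
    simpa only [hcross, vec3_dotProduct_self] using
      cross_dot_cross_self_pos hbb hhh hb_ne_h hb_ne_neg_h
  have hg_pos : 0 < (b₁ + h₁) ^ 2 + (b₂ + h₂) ^ 2 + (b₃ + h₃) ^ 2 := by
    simpa only [hsum, vec3_dotProduct_self] using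
      dotProduct_self_pos_of_ne_zero (add_eq_zero_iff_eq_neg.not.2 hb_ne_neg_h)
  have horth : u₁ * (b₁ + h₁) + u₂ * (b₂ + h₂) + u₃ * (b₃ + h₃) = 0 := by
    simpa only [hcross, hsum, vec3_dotProduct'] using cross_dot_add b h
  have hcs : c ^ 2 + s ^ 2 = 1 := by
    rw [hc, hs, ← vec3_dotProduct']
    exact sqrt_half_one_add_sq_add_sqrt_half_one_sub_sq
      (neg_one_lt_dotProduct_of_ne_neg hbb hhh hb_ne_neg_h).le
      (dotProduct_lt_one_of_ne hbb hhh hb_ne_h).le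
  have hu_unit := hnu ▸ sq_div_sqrt_add_sq_div_sqrt_add_sq_div_sqrt hu_pos
  have hg_unit := hng ▸ sq_div_sqrt_add_sq_div_sqrt_add_sq_div_sqrt hg_pos
  subst hr₁ hr₂
  refine ⟨?_, Quaternion.norm_eq_one_of_sq_add ?_, Quaternion.norm_eq_one_of_sq_add ?_⟩ <;>
    dsimp only
  · linear_combination s / (nu * ng) * horth
  · linear_combination hcs + s ^ 2 * hu_unit
  · linear_combination hg_unit
end

section
/- Any two unit quaternions p ≠ ±q determine a feasibility cone containing them: there exists a unit vector n ∈ ℝ³ and a unit vector b ∈ ℝ³ such that both p and q satisfy x ⊗ b̌ = ň ⊗ x, where one may take n as the normalized vector part of q ⊗ p⁻¹ and b = p⁻¹ ⊗ ň ⊗ p. -/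
/-!
Write `w = q * star p`, a unit quaternion. Since `p ≠ ±q`, `w ≠ ±1`, so its vector part is
nonzero and `ň` is that vector part normalized. Being a real multiple of `im w`, `ň` commutes with
`w = re w + im w`, hence `q * (star p * ň * p) = w * ň * p = ň * w * p = ň * q`. Conjugation by a
unit quaternion preserves the real part and the norm, so `b̌ = star p * ň * p` is again a pure unit
quaternion.
-/

open Real

namespace Quaternion

variable {p q x w : ℍ[ℝ]}

lemma star_mul_self_of_norm_eq_one (hp : ‖p‖ = 1) : star p * p = 1 := by
  rw [star_mul_self, normSq_eq_norm_mul_self, hp, mul_one, coe_one]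

lemma mul_star_self_of_norm_eq_one (hp : ‖p‖ = 1) : p * star p = 1 := by
  rw [self_mul_star, normSq_eq_norm_mul_self, hp, mul_one, coe_one]

lemma norm_sq_eq_of_re_eq_zero (hx : x.re = 0) : ‖x‖ ^ 2 = x.imI ^ 2 + x.imJ ^ 2 + x.imK ^ 2 := by
  rw [sq, ← normSq_eq_norm_mul_self, normSq_def', hx]
  ring

lemma norm_im_eq_sqrt (x : ℍ[ℝ]) : ‖x.im‖ = √(x.imI ^ 2 + x.imJ ^ 2 + x.imK ^ 2) := by
  rw [← imI_im, ← imJ_im, ← imK_im, ← norm_sq_eq_of_re_eq_zero (re_im x), sqrt_sq (norm_nonneg _)]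

lemma eq_one_or_eq_neg_one_of_im_eq_zero (hw : ‖w‖ = 1) (him : w.im = 0) : w = 1 ∨ w = -1 := by
  have hre : w = (w.re : ℍ[ℝ]) := by simpa [him] using (re_add_im w).symm
  rw [hre, norm_coe, norm_eq_abs, abs_eq (zero_le_one' ℝ)] at hw
  rcases hw with h | h
  · exact .inl (by rw [hre, h, coe_one])
  · exact .inr (by rw [hre, h, coe_neg, coe_one])

lemma im_mul_star_ne_zero (hp : ‖p‖ = 1) (hq : ‖q‖ = 1) (hpq : p ≠ q) (hpq' : p ≠ -q) :
    (q * star p).im ≠ 0 := by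
  intro him
  have hqp : q = q * star p * p := by rw [mul_assoc, star_mul_self_of_norm_eq_one hp, mul_one]
  have hw : ‖q * star p‖ = 1 := by rw [norm_mul, norm_star, hp, hq, mul_one]
  rcases eq_one_or_eq_neg_one_of_im_eq_zero hw him with h | h
  · exact hpq (by rw [hqp, h, one_mul])
  · exact hpq' (by rw [hqp, h, neg_one_mul, neg_neg])

lemma commute_smul_im_self (c : ℝ) (w : ℍ[ℝ]) : Commute (c • w.im) w := by
  have h := (coe_commute w.re (c • w.im)).symm.add_right ((Commute.refl w.im).smul_left c)
  rwa [re_add_im] at h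

lemma re_star_mul_mul (p x : ℍ[ℝ]) : (star p * x * p).re = normSq p * x.re := by
  simp only [re_mul, imI_mul, imJ_mul, imK_mul, re_star, imI_star, imJ_star, imK_star, normSq_def']
  ring

lemma norm_star_mul_mul (hp : ‖p‖ = 1) (x : ℍ[ℝ]) : ‖star p * x * p‖ = ‖x‖ := by
  rw [norm_mul, norm_mul, norm_star, hp, one_mul, mul_one]

lemma mul_star_mul_mul (hp : ‖p‖ = 1) (x : ℍ[ℝ]) : p * (star p * x * p) = x * p := by
  rw [← mul_assoc, ← mul_assoc, mul_star_self_of_norm_eq_one hp, one_mul]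

/-- For unit `q` this says `star p * x * p = star q * x * q`. -/
lemma mul_star_mul_mul_of_commute (hp : ‖p‖ = 1) (hx : Commute x (q * star p)) :
    q * (star p * x * p) = x * q := by
  calc q * (star p * x * p) = q * star p * x * p := by simp only [mul_assoc]
    _ = x * (q * star p) * p := by rw [hx.eq]
    _ = x * q := by rw [mul_assoc, mul_assoc, star_mul_self_of_norm_eq_one hp, mul_one]

end Quaternion

open Quaternion in
theorem stmt9 (p q : Quaternion ℝ) (hp : ‖p‖ = 1) (hq : ‖q‖ = 1)
    (hpq : p ≠ q) (hpq' : p ≠ -q)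
    (w : Quaternion ℝ) (hw : w = q * star p)
    (nm n₁ n₂ n₃ : ℝ)
    (hnm : nm = sqrt (w.imI^2 + w.imJ^2 + w.imK^2))
    (hn₁ : n₁ = w.imI / nm) (hn₂ : n₂ = w.imJ / nm) (hn₃ : n₃ = w.imK / nm)
    (nq bq : Quaternion ℝ)
    (hnq : nq = ⟨0, n₁, n₂, n₃⟩)
    (hbq : bq = star p * nq * p) :
    n₁^2 + n₂^2 + n₃^2 = 1 ∧
    bq.re = 0 ∧
    bq.imI^2 + bq.imJ^2 + bq.imK^2 = 1 ∧
    p * bq = nq * p ∧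
    q * bq = nq * q := by
  have hnq_eq : nq = ‖w.im‖⁻¹ • w.im := by
    rw [hnq, hn₁, hn₂, hn₃, hnm, ← norm_im_eq_sqrt]
    ext <;> simp [div_eq_inv_mul]
  have hnq_re : nq.re = 0 := by simp [hnq]
  have hnq_norm : ‖nq‖ = 1 := by
    rw [hnq_eq, norm_smul, norm_inv, norm_norm,
      inv_mul_cancel₀ (norm_ne_zero_iff.mpr (hw ▸ im_mul_star_ne_zero hp hq hpq hpq'))]
  have hbq_re : bq.re = 0 := by rw [hbq, re_star_mul_mul, hnq_re, mul_zero]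
  have hbq_norm : ‖bq‖ = 1 := by rw [hbq, norm_star_mul_mul hp, hnq_norm]
  refine ⟨?_, hbq_re, ?_, hbq ▸ mul_star_mul_mul hp nq, ?_⟩
  · have h := norm_sq_eq_of_re_eq_zero hnq_re
    rw [hnq_norm, hnq] at h
    simpa using h.symm
  · rw [← norm_sq_eq_of_re_eq_zero hbq_re, hbq_norm, one_pow]
  · rw [hbq, mul_star_mul_mul_of_commute hp (hw ▸ hnq_eq ▸ commute_smul_im_self _ w)]
end

section
/- For the two-vector cost function J(Φ₁, Φ₂) = ‖r₁(Φ₁) ⊗ q − r₂(Φ₂) ⊗ p‖², where r₁(Φ₁) = (cos(Φ₁/2), sin(Φ₁/2)·h) and r₂(Φ₂) = (cos(Φ₂/2), sin(Φ₂/2)·k), and p, q are unit quaternions with h, k unit vectors in ℝ³: J(Φ₁, Φ₂) = 2 + 2l₁c₁c₂ + 2l₂s₁s₂ + 2l₃c₁s₂ + 2l₄s₁c₂, where cᵢ = cos(Φᵢ/2), sᵢ = sin(Φᵢ/2), l₁ = −q₀p₀ − ⟪q,p⟫, l₂ = ⟪−q₀p + p₀q − q×p, h×k⟫ − (q₀p₀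 + ⟪q,p⟫)⟪h,k⟫, l₃ = ⟪k, q₀p − p₀q + q×p⟫, and l₄ = ⟪h, p₀q − q₀p + p×q⟫. -/
/-! Both `r₁ Φ₁ * Q` and `r₂ Φ₂ * P` are unit quaternions, so the cost is `2 - 2⟪r₁ Φ₁ * Q, r₂ Φ₂ * P⟫`,
and the inner product `re ((r₁ Φ₁ * Q) * star (r₂ Φ₂ * P))` is bilinear in `(c₁, s₁)` and `(c₂, s₂)`
with coefficients `-l₁, …, -l₄`. -/

open Real

theorem Quaternion.norm_eq_one_of_eq_mk_cos_sin_mul {r : Quaternion ℝ} {θ a b c : ℝ}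
    (habc : a^2 + b^2 + c^2 = 1) (hr : r = ⟨cos θ, sin θ * a, sin θ * b, sin θ * c⟩) :
    ‖r‖ = 1 := by
  have hnormSq : ‖r‖ * ‖r‖ = 1 := by
    rw [← Quaternion.normSq_eq_norm_mul_self, Quaternion.normSq_def', hr]
    linear_combination sin θ ^ 2 * habc + sin_sq_add_cos_sq θ
  nlinarith [norm_nonneg r]

theorem norm_sub_sq_of_norm_eq_one {E : Type*} [NormedAddCommGroup E] [InnerProductSpace ℝ E]
    {x y : E} (hx : ‖x‖ = 1) (hy : ‖y‖ = 1) :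
    ‖x - y‖ ^ 2 = 2 - 2 * inner ℝ x y := by
  rw [norm_sub_sq_real, hx, hy]
  ring

theorem stmt10 (h₁ h₂ h₃ k₁ k₂ k₃ q₀ q₁ q₂ q₃ p₀ p₁ p₂ p₃ : ℝ)
    (hh : h₁^2 + h₂^2 + h₃^2 = 1) (hk : k₁^2 + k₂^2 + k₃^2 = 1)
    (Q P : Quaternion ℝ)
    (hQ : Q = ⟨q₀, q₁, q₂, q₃⟩) (hP : P = ⟨p₀, p₁, p₂, p₃⟩)
    (hQn : ‖Q‖ = 1) (hPn : ‖P‖ = 1)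
    (l₁ l₂ l₃ l₄ : ℝ)
    (hl₁ : l₁ = -(q₀*p₀) - (q₁*p₁ + q₂*p₂ + q₃*p₃))
    (hl₂ : l₂ =
      ((-(q₀*p₁) + p₀*q₁ - (q₂*p₃ - q₃*p₂)) * (h₂*k₃ - h₃*k₂) +
       (-(q₀*p₂) + p₀*q₂ - (q₃*p₁ - q₁*p₃)) * (h₃*k₁ - h₁*k₃) +
       (-(q₀*p₃) + p₀*q₃ - (q₁*p₂ - q₂*p₁)) * (h₁*k₂ - h₂*k₁))
      - (q₀*p₀ + (q₁*p₁ + q₂*p₂ + q₃*p₃)) * (h₁*k₁ + h₂*k₂ + h₃*k₃))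
    (hl₃ : l₃ =
      k₁ * (q₀*p₁ - p₀*q₁ + (q₂*p₃ - q₃*p₂)) +
      k₂ * (q₀*p₂ - p₀*q₂ + (q₃*p₁ - q₁*p₃)) +
      k₃ * (q₀*p₃ - p₀*q₃ + (q₁*p₂ - q₂*p₁)))
    (hl₄ : l₄ =
      h₁ * (p₀*q₁ - q₀*p₁ + (p₂*q₃ - p₃*q₂)) +
      h₂ * (p₀*q₂ - q₀*p₂ + (p₃*q₁ - p₁*q₃)) +
      h₃ * (p₀*q₃ - q₀*p₃ + (p₁*q₂ - p₂*q₁)))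
    (r₁ r₂ : ℝ → Quaternion ℝ)
    (hr₁ : ∀ Φ, r₁ Φ = ⟨cos (Φ/2), sin (Φ/2) * h₁, sin (Φ/2) * h₂, sin (Φ/2) * h₃⟩)
    (hr₂ : ∀ Φ, r₂ Φ = ⟨cos (Φ/2), sin (Φ/2) * k₁, sin (Φ/2) * k₂, sin (Φ/2) * k₃⟩) :
    ∀ Φ₁ Φ₂ : ℝ,
      ‖r₁ Φ₁ * Q - r₂ Φ₂ * P‖^2
      = 2 + 2*l₁*cos (Φ₁/2)*cos (Φ₂/2) + 2*l₂*sin (Φ₁/2)*sin (Φ₂/2)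
          + 2*l₃*cos (Φ₁/2)*sin (Φ₂/2) + 2*l₄*sin (Φ₁/2)*cos (Φ₂/2) := by
  intro Φ₁ Φ₂
  have hr₁Q : ‖r₁ Φ₁ * Q‖ = 1 := by
    rw [norm_mul, hQn, Quaternion.norm_eq_one_of_eq_mk_cos_sin_mul hh (hr₁ Φ₁), one_mul]
  have hr₂P : ‖r₂ Φ₂ * P‖ = 1 := by
    rw [norm_mul, hPn, Quaternion.norm_eq_one_of_eq_mk_cos_sin_mul hk (hr₂ Φ₂), one_mul]
  have hinner : inner ℝ (r₁ Φ₁ * Q) (r₂ Φ₂ * P)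
      = -(l₁*cos (Φ₁/2)*cos (Φ₂/2) + l₂*sin (Φ₁/2)*sin (Φ₂/2)
          + l₃*cos (Φ₁/2)*sin (Φ₂/2) + l₄*sin (Φ₁/2)*cos (Φ₂/2)) := by
    simp only [Quaternion.inner_def, Quaternion.re_mul, Quaternion.imI_mul, Quaternion.imJ_mul,
      Quaternion.imK_mul, Quaternion.re_star, Quaternion.imI_star, Quaternion.imJ_star,
      Quaternion.imK_star]
    rw [hr₁, hr₂, hQ, hP, hl₁, hl₂, hl₃, hl₄]
    dsimp only
    ring
  rw [norm_sub_sq_of_norm_eq_one hr₁Q hr₂P, hinner]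
  ring
end

section
/- If h, b ∈ ℝ³ are unit vectors, p is a unit quaternion, and q = (p − ȟ ⊗ p ⊗ b̌)/‖p − ȟ ⊗ p ⊗ b̌‖ (assuming p − ȟ ⊗ p ⊗ b̌ ≠ 0), then q is a unit quaternion satisfying the measurement constraint q ⊗ b̌ = ȟ ⊗ q. -/
theorem Quaternion.mk_zero_mul_self_eq_neg_one {R : Type*} [CommRing R] {a b c : R}
    (h : a ^ 2 + b ^ 2 + c ^ 2 = 1) : (⟨0, a, b, c⟩ : Quaternion R) * ⟨0, a, b, c⟩ = -1 := by
  ext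
  · simp only [QuaternionAlgebra.mk_mul_mk, QuaternionAlgebra.re_neg, QuaternionAlgebra.re_one]
    linear_combination -h
  all_goals simp; ring

theorem sub_mul_mul_mul_eq_mul_sub_mul_mul {A : Type*} [Ring A] {h b : A} (hh : h * h = -1)
    (hb : b * b = -1) (p : A) : (p - h * p * b) * b = h * (p - h * p * b) :=
  calc (p - h * p * b) * b = p * b - h * p * (b * b) := by noncomm_ring
    _ = h * p - h * h * p * b := by rw [hh, hb]; noncomm_ring
    _ = h * (p - h * p * b) := by noncomm_ring

theorem stmt13_general (h₁ h₂ h₃ b₁ b₂ b₃ : ℝ)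
    (hh : h₁^2 + h₂^2 + h₃^2 = 1) (hb : b₁^2 + b₂^2 + b₃^2 = 1)
    (bc hc' : Quaternion ℝ)
    (hbc : bc = ⟨0, b₁, b₂, b₃⟩) (hhc : hc' = ⟨0, h₁, h₂, h₃⟩)
    (p : Quaternion ℝ)
    (d : Quaternion ℝ) (hd : d = p - hc' * p * bc) (hdne : d ≠ 0)
    (q : Quaternion ℝ) (hqdef : q = ‖d‖⁻¹ • d) :
    ‖q‖ = 1 ∧ q * bc = hc' * q := by
  have hb2 : bc * bc = -1 := by rw [hbc]; exact Quaternion.mk_zero_mul_self_eq_neg_one hb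
  have hh2 : hc' * hc' = -1 := by rw [hhc]; exact Quaternion.mk_zero_mul_self_eq_neg_one hh
  have hdb : d * bc = hc' * d := hd ▸ sub_mul_mul_mul_eq_mul_sub_mul_mul hh2 hb2 p
  subst hqdef
  exact ⟨norm_smul_inv_norm hdne, by rw [smul_mul_assoc, mul_smul_comm, hdb]⟩

theorem stmt13 (h₁ h₂ h₃ b₁ b₂ b₃ : ℝ)
    (hh : h₁^2 + h₂^2 + h₃^2 = 1) (hb : b₁^2 + b₂^2 + b₃^2 = 1)
    (bc hc' : Quaternion ℝ)
    (hbc : bc = ⟨0, b₁, b₂, b₃⟩) (hhc : hc' = ⟨0, h₁, h₂, h₃⟩)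
    (p : Quaternion ℝ) (hp : ‖p‖ = 1)
    (d : Quaternion ℝ) (hd : d = p - hc' * p * bc) (hdne : d ≠ 0)
    (q : Quaternion ℝ) (hqdef : q = ‖d‖⁻¹ • d) :
    ‖q‖ = 1 ∧ q * bc = hc' * q :=
  stmt13_general h₁ h₂ h₃ b₁ b₂ b₃ hh hb bc hc' hbc hhc p d hd hdne q hqdef
end

section
/- Let h, b ∈ ℝ³ be unit vectors and p a unit quaternion with p − ȟ ⊗ p ⊗ b̌ ≠ 0, and set q = (p − ȟ ⊗ p ⊗ b̌)/‖p − ȟ ⊗ p ⊗ b̌‖. Then the correction quaternion r = q ⊗ p⁻¹ has vector part orthogonal to h: ⟪h, Im(q ⊗ p⁻¹)⟫ = 0. -/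
/-!
For a pure quaternion `ȟ`, `⟪h, Im x⟫ = -Re(ȟ x)`, so it suffices that
`Re(ȟ (p - ȟ p b̌) p⁻¹) = 0`. Expanding, `Re(ȟ p p⁻¹) = |p|² Re ȟ = 0`, and since `ȟ² = -|h|²` is
real, `Re(ȟ² p b̌ p⁻¹) = -|h|² |p|² Re b̌ = 0`.
-/

namespace Quaternion

variable {R : Type*} [CommRing R]

theorem re_mul_comm (a b : ℍ[R]) : (a * b).re = (b * a).re := by
  simp only [re_mul]
  ring

theorem re_mul_mul_star (a b : ℍ[R]) : (a * b * star a).re = b.re * normSq a := by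
  rw [re_mul_comm, ← mul_assoc, star_mul_self, coe_mul_eq_smul, re_smul, smul_eq_mul, mul_comm]

theorem mul_self_of_re_eq_zero {u : ℍ[R]} (hu : u.re = 0) : u * u = -((normSq u : R) : ℍ[R]) := by
  rw [← self_mul_star, star_eq_two_re_sub, hu, mul_zero, coe_zero, zero_sub, mul_neg, neg_neg]

theorem dotProduct_im_eq_neg_re_mul {u : ℍ[R]} (hu : u.re = 0) (x : ℍ[R]) :
    u.imI * x.imI + u.imJ * x.imJ + u.imK * x.imK = -(u * x).re := by
  simp only [re_mul, hu]
  ring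

theorem re_mul_sub_mul_mul_mul_star_eq_zero {u v : ℍ[R]} (hu : u.re = 0) (hv : v.re = 0)
    (x : ℍ[R]) : (u * (x - u * x * v) * star x).re = 0 := by
  have hsplit : u * (x - u * x * v) * star x = u * (x * star x) - (u * u) * (x * v * star x) := by
    noncomm_ring
  rw [hsplit, self_mul_star, mul_self_of_re_eq_zero hu, re_sub, neg_mul, re_neg, mul_coe_eq_smul,
    coe_mul_eq_smul, re_smul, re_smul, re_mul_mul_star, hu, hv, zero_mul, smul_zero, smul_zero,
    neg_zero, sub_zero]

end Quaternion

theorem stmt14_general (h₁ h₂ h₃ b₁ b₂ b₃ : ℝ)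
    (bc hc' : Quaternion ℝ)
    (hbc : bc = ⟨0, b₁, b₂, b₃⟩) (hhc : hc' = ⟨0, h₁, h₂, h₃⟩)
    (p : Quaternion ℝ)
    (d : Quaternion ℝ) (hd : d = p - hc' * p * bc)
    (q : Quaternion ℝ) (hqdef : q = ‖d‖⁻¹ • d) :
    h₁ * (q * star p).imI + h₂ * (q * star p).imJ + h₃ * (q * star p).imK = 0 := by
  have hh_pure : hc'.re = 0 := by rw [hhc]
  have hb_pure : bc.re = 0 := by rw [hbc]
  calc h₁ * (q * star p).imI + h₂ * (q * star p).imJ + h₃ * (q * star p).imK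
      = -(hc' * (q * star p)).re := by
        subst hhc
        exact Quaternion.dotProduct_im_eq_neg_re_mul hh_pure _
    _ = -(‖d‖⁻¹ * (hc' * (p - hc' * p * bc) * star p).re) := by
        rw [hqdef, smul_mul_assoc, mul_smul_comm, Quaternion.re_smul, smul_eq_mul, ← mul_assoc, hd]
    _ = 0 := by
        rw [Quaternion.re_mul_sub_mul_mul_mul_star_eq_zero hh_pure hb_pure, mul_zero, neg_zero]

theorem stmt14 (h₁ h₂ h₃ b₁ b₂ b₃ : ℝ)
    (hh : h₁^2 + h₂^2 + h₃^2 = 1) (hb : b₁^2 + b₂^2 + b₃^2 = 1)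
    (bc hc' : Quaternion ℝ)
    (hbc : bc = ⟨0, b₁, b₂, b₃⟩) (hhc : hc' = ⟨0, h₁, h₂, h₃⟩)
    (p : Quaternion ℝ) (hp : ‖p‖ = 1)
    (d : Quaternion ℝ) (hd : d = p - hc' * p * bc) (hdne : d ≠ 0)
    (q : Quaternion ℝ) (hqdef : q = ‖d‖⁻¹ • d) :
    h₁ * (q * star p).imI + h₂ * (q * star p).imJ + h₃ * (q * star p).imK = 0 :=
  stmt14_general h₁ h₂ h₃ b₁ b₂ b₃ bc hc' hbc hhc p d hd q hqdef
end

section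
/- Let h, b ∈ ℝ³ be unit vectors with b ≠ ±h, and define the special solutions r₁ = (c, s·(b×h)/‖b×h‖), r₂ = (0, (b+h)/‖b+h‖), with c = √((1+⟪b,h⟫)/2), s = √((1−⟪b,h⟫)/2). Viewing quaternions as vectors in ℝ⁴, the matrix identity 2(r₁r₁ᵀ + r₂r₂ᵀ) = I₄ − [ȟ⊗][⊗b̌] holds, where [ȟ⊗] is the 4×4 matrix of left multiplication by ȟ and [⊗b̌] is the 4×4 matrix of right multiplication by b̌. Equivalently, for every quaternion p: 2(⟪r₁,p⟫ r₁ + ⟪r₂,p⟫ r₂) = p − ȟ ⊗ p ⊗ b̌. -/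
/-!
Both special solutions are normalisations of simple quaternions: `ȟ * b̌ = (-⟪h, b⟫, h × b)`, so
`1 - ȟ * b̌ = (1 + ⟪b, h⟫, b × h)`, and since `‖b × h‖ = 2cs`, `‖b + h‖ = 2c` we get
`r₁ = (2c)⁻¹ • (1 - ȟ * b̌)` and `r₂ = (2c)⁻¹ • (ȟ + b̌)`. As `4c² = 2 (1 + ⟪b, h⟫)`, the claim
reduces to the identity
  `⟪1 - ȟ b̌, p⟫ (1 - ȟ b̌) + ⟪ȟ + b̌, p⟫ (ȟ + b̌) = (1 + ⟪ȟ, b̌⟫) (p - ȟ p b̌)`,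
which holds for all pure unit quaternions and is checked coordinatewise modulo
`‖ȟ‖² = ‖b̌‖² = 1`.
-/

open Real

open scoped RealInnerProductSpace Quaternion

theorem eq_zero_of_sq_add_sq_add_sq_eq_zero {R : Type*} [CommRing R] [LinearOrder R]
    [IsStrictOrderedRing R] {x y z : R} (h : x ^ 2 + y ^ 2 + z ^ 2 = 0) :
    x = 0 ∧ y = 0 ∧ z = 0 := by
  refine ⟨?_, ?_, ?_⟩ <;> apply pow_eq_zero_iff two_ne_zero |>.1 <;>
    nlinarith [sq_nonneg x, sq_nonneg y, sq_nonneg z]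

theorem neg_one_lt_dot_of_ne_neg {h₁ h₂ h₃ b₁ b₂ b₃ : ℝ}
    (hh : h₁ ^ 2 + h₂ ^ 2 + h₃ ^ 2 = 1) (hb : b₁ ^ 2 + b₂ ^ 2 + b₃ ^ 2 = 1)
    (hne : ¬ (b₁ = -h₁ ∧ b₂ = -h₂ ∧ b₃ = -h₃)) :
    -1 < b₁ * h₁ + b₂ * h₂ + b₃ * h₃ := by
  by_contra! hle
  obtain ⟨e₁, e₂, e₃⟩ := eq_zero_of_sq_add_sq_add_sq_eq_zero (x := b₁ + h₁) (y := b₂ + h₂)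
    (z := b₃ + h₃) (by nlinarith [sq_nonneg (b₁ + h₁), sq_nonneg (b₂ + h₂), sq_nonneg (b₃ + h₃)])
  exact hne ⟨by linarith, by linarith, by linarith⟩

theorem real_inner_smul_smul_self {E : Type*} [NormedAddCommGroup E] [InnerProductSpace ℝ E]
    (k : ℝ) (x p : E) : ⟪k • x, p⟫ • (k • x) = k ^ 2 • (⟪x, p⟫ • x) := by
  rw [real_inner_smul_left, smul_smul, smul_smul]
  congr 1
  ring

namespace Quaternion

theorem inner_def' (a b : ℍ) :
    ⟪a, b⟫ = a.re * b.re + a.imI * b.imI + a.imJ * b.imJ + a.imK * b.imK := by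
  simp [inner_def]

theorem inner_smul_add_inner_smul_eq_smul_sub_mul_mul {h b : ℍ}
    (hh₀ : h.re = 0) (hb₀ : b.re = 0) (hh : normSq h = 1) (hb : normSq b = 1) (p : ℍ) :
    ⟪1 - h * b, p⟫ • (1 - h * b) + ⟪h + b, p⟫ • (h + b) = (1 + ⟪h, b⟫) • (p - h * p * b) := by
  rw [normSq_def', hh₀] at hh
  rw [normSq_def', hb₀] at hb
  ext <;> simp only [inner_def', smul_eq_mul, hh₀, hb₀, re_add, re_sub, re_mul, re_smul, re_one,
    imI_add, imI_sub, imI_mul, imI_smul, imI_one, imJ_add, imJ_sub, imJ_mul, imJ_smul, imJ_one,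
    imK_add, imK_sub, imK_mul, imK_smul, imK_one]
  · ring
  · linear_combination
      (p.imI * (b.imI ^ 2 + b.imJ ^ 2 + b.imK ^ 2)
        - b.imI * (b.imI * p.imI + b.imJ * p.imJ + b.imK * p.imK)) * hh
      + (p.imI - h.imI * (h.imI * p.imI + h.imJ * p.imJ + h.imK * p.imK)) * hb
  · linear_combination
      (p.imJ * (b.imI ^ 2 + b.imJ ^ 2 + b.imK ^ 2)
        - b.imJ * (b.imI * p.imI + b.imJ * p.imJ + b.imK * p.imK)) * hh
      + (p.imJ - h.imJ * (h.imI * p.imI + h.imJ * p.imJ + h.imK * p.imK)) * hb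
  · linear_combination
      (p.imK * (b.imI ^ 2 + b.imJ ^ 2 + b.imK ^ 2)
        - b.imK * (b.imI * p.imI + b.imJ * p.imJ + b.imK * p.imK)) * hh
      + (p.imK - h.imK * (h.imI * p.imI + h.imJ * p.imJ + h.imK * p.imK)) * hb

theorem two_smul_inner_smul_add_inner_smul_eq_sub_mul_mul {h b : ℍ}
    (hh₀ : h.re = 0) (hb₀ : b.re = 0) (hh : normSq h = 1) (hb : normSq b = 1) {k : ℝ}
    (hk : 2 * k ^ 2 * (1 + ⟪h, b⟫) = 1) (p : ℍ) :
    (2 : ℝ) • (⟪k • (1 - h * b), p⟫ • (k • (1 - h * b)) + ⟪k • (h + b), p⟫ • (k • (h + b)))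
      = p - h * p * b := by
  rw [real_inner_smul_smul_self, real_inner_smul_smul_self, ← smul_add,
    inner_smul_add_inner_smul_eq_smul_sub_mul_mul hh₀ hb₀ hh hb, smul_smul, smul_smul, hk,
    one_smul]

section UnitVectors

variable {h₁ h₂ h₃ b₁ b₂ b₃ : ℝ}

theorem mk_cross_div_eq_inv_two_mul_smul_one_sub_mul (hh : h₁ ^ 2 + h₂ ^ 2 + h₃ ^ 2 = 1)
    (hb : b₁ ^ 2 + b₂ ^ 2 + b₃ ^ 2 = 1) (hD : -1 < b₁ * h₁ + b₂ * h₂ + b₃ * h₃) {c s nu : ℝ}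
    (hc : c = √((1 + (b₁ * h₁ + b₂ * h₂ + b₃ * h₃)) / 2))
    (hs : s = √((1 - (b₁ * h₁ + b₂ * h₂ + b₃ * h₃)) / 2))
    (hnu : nu = √((b₂ * h₃ - b₃ * h₂) ^ 2 + (b₃ * h₁ - b₁ * h₃) ^ 2 + (b₁ * h₂ - b₂ * h₁) ^ 2)) :
    (⟨c, s * (b₂ * h₃ - b₃ * h₂) / nu, s * (b₃ * h₁ - b₁ * h₃) / nu,
        s * (b₁ * h₂ - b₂ * h₁) / nu⟩ : ℍ)
      = (2 * c)⁻¹ • (1 - ⟨0, h₁, h₂, h₃⟩ * ⟨0, b₁, b₂, b₃⟩) := by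
  have hD_le : b₁ * h₁ + b₂ * h₂ + b₃ * h₃ ≤ 1 := by
    nlinarith [sq_nonneg (b₁ - h₁), sq_nonneg (b₂ - h₂), sq_nonneg (b₃ - h₃)]
  have hc_pos : 0 < c := hc ▸ sqrt_pos.2 (by linarith)
  have hc_sq : c ^ 2 = _ := hc ▸ sq_sqrt (by linarith)
  have hs_sq : s ^ 2 = _ := hs ▸ sq_sqrt (by linarith)
  have hnu_eq : nu = 2 * c * s := by
    rw [hnu, sqrt_eq_iff_eq_sq (by positivity) (by rw [hs]; positivity)]
    linear_combination (b₁ ^ 2 + b₂ ^ 2 + b₃ ^ 2) * hh + hb - 4 * c ^ 2 * hs_sq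
      - 2 * (1 - (b₁ * h₁ + b₂ * h₂ + b₃ * h₃)) * hc_sq
  have hcross_zero : nu = 0 →
      b₂ * h₃ - b₃ * h₂ = 0 ∧ b₃ * h₁ - b₁ * h₃ = 0 ∧ b₁ * h₂ - b₂ * h₁ = 0 := fun h0 ↦
    eq_zero_of_sq_add_sq_add_sq_eq_zero ((sqrt_eq_zero (by positivity)).1 (hnu ▸ h0))
  -- For `b = h` both `s` and `nu` vanish; then `s * x / nu = 0` by `x / 0 = 0`, and `x = 0` too.
  have hscale : ∀ x : ℝ, (nu = 0 → x = 0) → s * x / nu = (2 * c)⁻¹ * x := by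
    intro x hx
    rcases eq_or_ne s 0 with hs0 | hs0
    · simp [hx (by simp [hnu_eq, hs0])]
    · rw [hnu_eq]
      field_simp
  ext <;> simp only [QuaternionAlgebra.mk_mul_mk, QuaternionAlgebra.re_smul,
    QuaternionAlgebra.imI_smul, QuaternionAlgebra.imJ_smul, QuaternionAlgebra.imK_smul,
    QuaternionAlgebra.re_sub, QuaternionAlgebra.imI_sub, QuaternionAlgebra.imJ_sub,
    QuaternionAlgebra.imK_sub, QuaternionAlgebra.re_one, QuaternionAlgebra.imI_one,
    QuaternionAlgebra.imJ_one, QuaternionAlgebra.imK_one, smul_eq_mul]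
  · field_simp
    linear_combination 2 * hc_sq
  · rw [hscale _ fun h0 ↦ (hcross_zero h0).1]; ring
  · rw [hscale _ fun h0 ↦ (hcross_zero h0).2.1]; ring
  · rw [hscale _ fun h0 ↦ (hcross_zero h0).2.2]; ring

theorem mk_add_div_eq_inv_two_mul_smul_add (hh : h₁ ^ 2 + h₂ ^ 2 + h₃ ^ 2 = 1)
    (hb : b₁ ^ 2 + b₂ ^ 2 + b₃ ^ 2 = 1) (hD : -1 < b₁ * h₁ + b₂ * h₂ + b₃ * h₃) {c ng : ℝ}
    (hc : c = √((1 + (b₁ * h₁ + b₂ * h₂ + b₃ * h₃)) / 2))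
    (hng : ng = √((b₁ + h₁) ^ 2 + (b₂ + h₂) ^ 2 + (b₃ + h₃) ^ 2)) :
    (⟨0, (b₁ + h₁) / ng, (b₂ + h₂) / ng, (b₃ + h₃) / ng⟩ : ℍ)
      = (2 * c)⁻¹ • (⟨0, h₁, h₂, h₃⟩ + ⟨0, b₁, b₂, b₃⟩) := by
  have hc_pos : 0 < c := hc ▸ sqrt_pos.2 (by linarith)
  have hc_sq : c ^ 2 = _ := hc ▸ sq_sqrt (by linarith)
  have hng_eq : ng = 2 * c := by
    rw [hng, sqrt_eq_iff_eq_sq (by positivity) (by positivity)]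
    linear_combination hh + hb - 4 * hc_sq
  subst hng_eq
  ext <;> simp only [QuaternionAlgebra.mk_add_mk, QuaternionAlgebra.smul_mk] <;> ring

end UnitVectors

end Quaternion

theorem stmt15_general (h₁ h₂ h₃ b₁ b₂ b₃ : ℝ)
    (hh : h₁^2 + h₂^2 + h₃^2 = 1) (hb : b₁^2 + b₂^2 + b₃^2 = 1)
    (hne' : ¬ (b₁ = -h₁ ∧ b₂ = -h₂ ∧ b₃ = -h₃))
    (c s u₁ u₂ u₃ nu ng : ℝ)
    (hc : c = sqrt ((1 + (b₁*h₁ + b₂*h₂ + b₃*h₃))/2))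
    (hs : s = sqrt ((1 - (b₁*h₁ + b₂*h₂ + b₃*h₃))/2))
    (hu₁ : u₁ = b₂*h₃ - b₃*h₂) (hu₂ : u₂ = b₃*h₁ - b₁*h₃) (hu₃ : u₃ = b₁*h₂ - b₂*h₁)
    (hnu : nu = sqrt (u₁^2 + u₂^2 + u₃^2))
    (hng : ng = sqrt ((b₁+h₁)^2 + (b₂+h₂)^2 + (b₃+h₃)^2))
    (r₁ r₂ bc hc' : Quaternion ℝ)
    (hr₁ : r₁ = ⟨c, s * u₁ / nu, s * u₂ / nu, s * u₃ / nu⟩)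
    (hr₂ : r₂ = ⟨0, (b₁+h₁)/ng, (b₂+h₂)/ng, (b₃+h₃)/ng⟩)
    (hbc : bc = ⟨0, b₁, b₂, b₃⟩) (hhc : hc' = ⟨0, h₁, h₂, h₃⟩) :
    ∀ p : Quaternion ℝ,
      (2 : ℝ) • ((r₁.re * p.re + r₁.imI * p.imI + r₁.imJ * p.imJ + r₁.imK * p.imK) • r₁ +
                 (r₂.re * p.re + r₂.imI * p.imI + r₂.imJ * p.imJ + r₂.imK * p.imK) • r₂)
        = p - hc' * p * bc := by
  intro p
  subst hu₁ hu₂ hu₃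
  have hD := neg_one_lt_dot_of_ne_neg hh hb hne'
  have hc_sq : c ^ 2 = _ := hc ▸ sq_sqrt (by linarith)
  have hc_ne : c ≠ 0 := (hc ▸ sqrt_pos.2 (by linarith)).ne'
  have hk : 2 * (2 * c)⁻¹ ^ 2 * (1 + ⟪hc', bc⟫) = 1 := by
    rw [Quaternion.inner_def', hhc, hbc]
    dsimp only
    field_simp
    linear_combination -2 * hc_sq
  rw [← Quaternion.inner_def', ← Quaternion.inner_def', hr₁, hr₂,
    Quaternion.mk_cross_div_eq_inv_two_mul_smul_one_sub_mul hh hb hD hc hs hnu,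
    Quaternion.mk_add_div_eq_inv_two_mul_smul_add hh hb hD hc hng, ← hhc, ← hbc]
  exact Quaternion.two_smul_inner_smul_add_inner_smul_eq_sub_mul_mul (by rw [hhc]) (by rw [hbc])
    (by rw [Quaternion.normSq_def', hhc]; linear_combination hh)
    (by rw [Quaternion.normSq_def', hbc]; linear_combination hb) hk p

theorem stmt15 (h₁ h₂ h₃ b₁ b₂ b₃ : ℝ)
    (hh : h₁^2 + h₂^2 + h₃^2 = 1) (hb : b₁^2 + b₂^2 + b₃^2 = 1)
    (hne : ¬ (b₁ = h₁ ∧ b₂ = h₂ ∧ b₃ = h₃))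
    (hne' : ¬ (b₁ = -h₁ ∧ b₂ = -h₂ ∧ b₃ = -h₃))
    (c s u₁ u₂ u₃ nu ng : ℝ)
    (hc : c = sqrt ((1 + (b₁*h₁ + b₂*h₂ + b₃*h₃))/2))
    (hs : s = sqrt ((1 - (b₁*h₁ + b₂*h₂ + b₃*h₃))/2))
    (hu₁ : u₁ = b₂*h₃ - b₃*h₂) (hu₂ : u₂ = b₃*h₁ - b₁*h₃) (hu₃ : u₃ = b₁*h₂ - b₂*h₁)
    (hnu : nu = sqrt (u₁^2 + u₂^2 + u₃^2))
    (hng : ng = sqrt ((b₁+h₁)^2 + (b₂+h₂)^2 + (b₃+h₃)^2))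
    (r₁ r₂ bc hc' : Quaternion ℝ)
    (hr₁ : r₁ = ⟨c, s * u₁ / nu, s * u₂ / nu, s * u₃ / nu⟩)
    (hr₂ : r₂ = ⟨0, (b₁+h₁)/ng, (b₂+h₂)/ng, (b₃+h₃)/ng⟩)
    (hbc : bc = ⟨0, b₁, b₂, b₃⟩) (hhc : hc' = ⟨0, h₁, h₂, h₃⟩) :
    ∀ p : Quaternion ℝ,
      (2 : ℝ) • ((r₁.re * p.re + r₁.imI * p.imI + r₁.imJ * p.imJ + r₁.imK * p.imK) • r₁ +
                 (r₂.re * p.re + r₂.imI * p.imI + r₂.imJ * p.imJ + r₂.imK * p.imK) • r₂)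
        = p - hc' * p * bc :=
  stmt15_general h₁ h₂ h₃ b₁ b₂ b₃ hh hb hne' c s u₁ u₂ u₃ nu ng hc hs hu₁ hu₂ hu₃ hnu hng r₁ r₂ bc
    hc' hr₁ hr₂ hbc hhc
end

section
/- Let h, b ∈ ℝ³ be unit vectors with b ≠ −h, and let p be a unit quaternion. Define h_p = p ⊗ b̌ ⊗ p⁻¹ (a pure quaternion with unit vector part) and suppose ⟪Im(h_p), h⟫ ≠ −1. Then the quaternion r = (1 + ⟪Im(h_p), h⟫, Im(h_p) × h)/√(2(1 + ⟪Im(h_p), h⟫)) is a unit quaternion satisfying r ⊗ h_p = ȟ ⊗ r, and moreover √(2(1 + ⟪Im(h_p), h⟫))·r = 1 − ȟ ⊗ p ⊗ b̌ ⊗ p⁻¹. -/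
open Real Quaternion

/-!
For pure unit quaternions `h` and `u` we have `h² = u² = -1`, hence
`(1 - h u) u = u + h = h (1 - h u)`: the quaternion `q = 1 - h u` intertwines `u` and `h`.
Its real part is `1 + ⟪u, h⟫` and its vector part `u × h`, and `‖q‖² = 2 (1 + ⟪u, h⟫)`,
so `r = q / ‖q‖` is the unit quaternion of the statement as soon as `⟪u, h⟫ ≠ -1`.
-/

theorem one_sub_mul_mul_eq_mul_one_sub_mul {R : Type*} [Ring R] {h u : R}
    (hh : h * h = -1) (hu : u * u = -1) : (1 - h * u) * u = h * (1 - h * u) := by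
  rw [sub_mul, mul_sub, one_mul, mul_one, mul_assoc, hu, ← mul_assoc, hh]
  noncomm_ring

namespace Quaternion

theorem mul_self_eq_neg_one {u : Quaternion ℝ} (hre : u.re = 0) (hu : ‖u‖ = 1) : u * u = -1 := by
  have hstar : star u = -u := star_eq_neg.mpr hre
  rw [← neg_neg (u * u), ← mul_neg, ← hstar, self_mul_star, normSq_eq_norm_mul_self, hu]
  norm_num

theorem re_mul_mul_star_eq_zero (p : Quaternion ℝ) {b : Quaternion ℝ} (hb : b.re = 0) :
    (p * b * star p).re = 0 := by
  rw [← star_eq_neg, star_mul, star_mul, star_star, star_eq_neg.mpr hb]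
  noncomm_ring

theorem norm_eq_one_of_re_eq_zero {u : Quaternion ℝ} (hre : u.re = 0)
    (h : u.imI ^ 2 + u.imJ ^ 2 + u.imK ^ 2 = 1) : ‖u‖ = 1 := by
  have hsq : ‖u‖ * ‖u‖ = 1 := by
    rw [← normSq_eq_norm_mul_self, normSq_def', hre]
    linear_combination h
  exact (mul_self_eq_one_iff.mp hsq).resolve_right (by linarith [norm_nonneg u])

theorem normSq_one_sub (x : Quaternion ℝ) : normSq (1 - x) = 1 - 2 * x.re + normSq x := by
  simp only [normSq_def', re_sub, imI_sub, imJ_sub, imK_sub, re_one, imI_one, imJ_one, imK_one]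
  ring

theorem one_sub_mul_of_re_eq_zero {h u : Quaternion ℝ} (hh : h.re = 0) (hu : u.re = 0) :
    1 - h * u = ⟨1 + (u.imI * h.imI + u.imJ * h.imJ + u.imK * h.imK),
      u.imJ * h.imK - u.imK * h.imJ, u.imK * h.imI - u.imI * h.imK,
      u.imI * h.imJ - u.imJ * h.imI⟩ := by
  ext <;> simp only [re_sub, imI_sub, imJ_sub, imK_sub, re_one, imI_one, imJ_one, imK_one,
    re_mul, imI_mul, imJ_mul, imK_mul, hh, hu] <;> ring

end Quaternion

theorem stmt16_general (h₁ h₂ h₃ b₁ b₂ b₃ : ℝ)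
    (hh : h₁^2 + h₂^2 + h₃^2 = 1) (hb : b₁^2 + b₂^2 + b₃^2 = 1)
    (bc hc' : Quaternion ℝ)
    (hbc : bc = ⟨0, b₁, b₂, b₃⟩) (hhc : hc' = ⟨0, h₁, h₂, h₃⟩)
    (p : Quaternion ℝ) (hp : ‖p‖ = 1)
    (hpq : Quaternion ℝ) (hhp : hpq = p * bc * star p)
    (d : ℝ) (hd : d = hpq.imI * h₁ + hpq.imJ * h₂ + hpq.imK * h₃)
    (hdne : d ≠ -1)
    (w₁ w₂ w₃ : ℝ)
    (hw₁ : w₁ = hpq.imJ * h₃ - hpq.imK * h₂)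
    (hw₂ : w₂ = hpq.imK * h₁ - hpq.imI * h₃)
    (hw₃ : w₃ = hpq.imI * h₂ - hpq.imJ * h₁)
    (r : Quaternion ℝ)
    (hr : r = (sqrt (2 * (1 + d)))⁻¹ • (⟨1 + d, w₁, w₂, w₃⟩ : Quaternion ℝ)) :
    ‖r‖ = 1 ∧
    r * hpq = hc' * r ∧
    (sqrt (2 * (1 + d))) • r = 1 - hc' * p * bc * star p := by
  have hb_re : bc.re = 0 := by rw [hbc]
  have hh_re : hc'.re = 0 := by rw [hhc]
  have hh_norm : ‖hc'‖ = 1 := norm_eq_one_of_re_eq_zero hh_re (by rw [hhc]; exact hh)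
  have hb_norm : ‖bc‖ = 1 := norm_eq_one_of_re_eq_zero hb_re (by rw [hbc]; exact hb)
  have hu_re : hpq.re = 0 := hhp ▸ re_mul_mul_star_eq_zero p hb_re
  have hu_norm : ‖hpq‖ = 1 := by
    rw [hhp, norm_mul, norm_mul, norm_star, hp, hb_norm, one_mul, one_mul]
  set q := 1 - hc' * hpq with hq_def
  have hq : q = ⟨1 + d, w₁, w₂, w₃⟩ := by
    rw [hq_def, one_sub_mul_of_re_eq_zero hh_re hu_re]
    subst hhc hd hw₁ hw₂ hw₃
    rfl
  have hnormSq_q : normSq q = 2 * (1 + d) := by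
    rw [hq_def, normSq_one_sub, map_mul, normSq_eq_norm_mul_self, normSq_eq_norm_mul_self,
      hh_norm, hu_norm, re_mul, hu_re, hh_re]
    subst hhc hd
    dsimp only
    ring
  have hs : sqrt (2 * (1 + d)) = ‖q‖ := by
    rw [← hnormSq_q, normSq_eq_norm_mul_self, sqrt_mul_self (norm_nonneg q)]
  have hq_ne : q ≠ 0 := by
    rw [← normSq_ne_zero, hnormSq_q]
    exact fun h0 => hdne (by linarith)
  -- `hr` elaborates `•` at `QuaternionAlgebra ℝ (-1) 0 (-1)`; `rfl` moves it back to `Quaternion ℝ`.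
  replace hr : r = ‖q‖⁻¹ • q := by rw [hr, ← hq, hs]; rfl
  subst hr
  refine ⟨norm_smul_inv_norm hq_ne, ?_, ?_⟩
  · rw [smul_mul_assoc, mul_smul_comm, hq_def, one_sub_mul_mul_eq_mul_one_sub_mul
      (mul_self_eq_neg_one hh_re hh_norm) (mul_self_eq_neg_one hu_re hu_norm)]
  · rw [hs, smul_inv_smul₀ (norm_ne_zero_iff.mpr hq_ne), hq_def, hhp]
    noncomm_ring

theorem stmt16 (h₁ h₂ h₃ b₁ b₂ b₃ : ℝ)
    (hh : h₁^2 + h₂^2 + h₃^2 = 1) (hb : b₁^2 + b₂^2 + b₃^2 = 1)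
    (hne' : ¬ (b₁ = -h₁ ∧ b₂ = -h₂ ∧ b₃ = -h₃))
    (bc hc' : Quaternion ℝ)
    (hbc : bc = ⟨0, b₁, b₂, b₃⟩) (hhc : hc' = ⟨0, h₁, h₂, h₃⟩)
    (p : Quaternion ℝ) (hp : ‖p‖ = 1)
    (hpq : Quaternion ℝ) (hhp : hpq = p * bc * star p)
    (d : ℝ) (hd : d = hpq.imI * h₁ + hpq.imJ * h₂ + hpq.imK * h₃)
    (hdne : d ≠ -1)
    (w₁ w₂ w₃ : ℝ)
    (hw₁ : w₁ = hpq.imJ * h₃ - hpq.imK * h₂)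
    (hw₂ : w₂ = hpq.imK * h₁ - hpq.imI * h₃)
    (hw₃ : w₃ = hpq.imI * h₂ - hpq.imJ * h₁)
    (r : Quaternion ℝ)
    (hr : r = (sqrt (2 * (1 + d)))⁻¹ • (⟨1 + d, w₁, w₂, w₃⟩ : Quaternion ℝ)) :
    ‖r‖ = 1 ∧
    r * hpq = hc' * r ∧
    (sqrt (2 * (1 + d))) • r = 1 - hc' * p * bc * star p :=
  stmt16_general h₁ h₂ h₃ b₁ b₂ b₃ hh hb bc hc' hbc hhc p hp hpq hhp d hd hdne w₁ w₂ w₃ hw₁ hw₂ hw₃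
    r hr
end

section
/- If h = (0,0,1) and b ∈ ℝ³ is a unit vector with b₃ ≠ −1, and p = (p₀,p₁,p₂,p₃) is a unit quaternion, then with κ = ((1+b₃)p₀ − b₁p₂ + b₂p₁)/(b₁p₁ + b₂p₂ + (1+b₃)p₃) (assuming the denominator is nonzero), the quaternion q = (κ(1+b₃), κb₂+b₁, −κb₁+b₂, 1+b₃)/√(2(1+κ²)(1+b₃)) is a unit quaternion satisfying q ⊗ b̌ = ȟ ⊗ q. The normalization uses the identity (1+b₃)² + b₁² + b₂² = 2(1+b₃). -/
/-!
Both `b̌` and `ȟ` are unit pure quaternions, so they square to `-1`; hence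
`ȟ (b̌ + ȟ) = ȟ b̌ - 1 = (b̌ + ȟ) b̌`. Left multiplication by anything commuting with `ȟ`,
such as `1 - κ ȟ`, preserves this relation, and the unnormalized `q` is exactly
`(1 - κ ȟ)(b̌ + ȟ)`, whose squared norm is `(1 + κ²) · 2(1 + b₃)`.
-/

open Real

theorem semiconjBy_add_of_sq_eq_neg_one {A : Type*} [Ring A] {b h : A}
    (hb : b ^ 2 = -1) (hh : h ^ 2 = -1) : SemiconjBy (b + h) b h := by
  rw [sq] at hb hh
  rw [SemiconjBy, add_mul, mul_add, hb, hh, add_comm]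

theorem semiconjBy_one_sub_smul_mul_add {R A : Type*} [CommSemiring R] [Ring A] [Algebra R A]
    {b h : A} (hb : b ^ 2 = -1) (hh : h ^ 2 = -1) (κ : R) :
    SemiconjBy ((1 - κ • h) * (b + h)) b h :=
  SemiconjBy.mul_left ((Commute.one_left h).sub_left ((Commute.refl h).smul_left κ))
    (semiconjBy_add_of_sq_eq_neg_one hb hh)

namespace Quaternion

theorem sq_eq_neg_one_of_re_eq_zero {R : Type*} [CommRing R] {a : ℍ[R]} (hre : a.re = 0)
    (hn : normSq a = 1) : a ^ 2 = -1 := by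
  have hstar : star a = -a := by ext <;> simp [hre]
  rw [sq, ← neg_neg (a * a), ← mul_neg, ← hstar, self_mul_star, hn, coe_one]

end Quaternion

open Quaternion

theorem stmt18_general (b₁ b₂ b₃ : ℝ) (hb : b₁^2 + b₂^2 + b₃^2 = 1) (hb₃ : b₃ ≠ -1)
    (κ : ℝ)
    (bc hc' : Quaternion ℝ)
    (hbc : bc = ⟨0, b₁, b₂, b₃⟩) (hhc : hc' = ⟨0, 0, 0, 1⟩)
    (q : Quaternion ℝ)
    (hq : q = (sqrt (2 * (1+κ^2) * (1+b₃)))⁻¹ •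
      (⟨κ*(1+b₃), κ*b₂ + b₁, -(κ*b₁) + b₂, 1+b₃⟩ : Quaternion ℝ)) :
    ‖q‖ = 1 ∧ q * bc = hc' * q ∧ (1+b₃)^2 + b₁^2 + b₂^2 = 2*(1+b₃) := by
  -- The anonymous constructor elaborates in `ℍ[ℝ,-1,0,-1]`, where the `ℍ` simp lemmas do not fire.
  obtain ⟨w, hw_def⟩ : ∃ w : ℍ[ℝ], w = ⟨κ*(1+b₃), κ*b₂ + b₁, -(κ*b₁) + b₂, 1+b₃⟩ := ⟨_, rfl⟩
  rw [← hw_def] at hq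
  have hw : w = (1 - κ • hc') * (bc + hc') := by
    ext <;> simp only [re_mul, imI_mul, imJ_mul, imK_mul, re_sub, imI_sub, imJ_sub, imK_sub,
      re_add, imI_add, imJ_add, imK_add, re_smul, imI_smul, imJ_smul, imK_smul,
      re_one, imI_one, imJ_one, imK_one, smul_eq_mul] <;> subst hbc hhc hw_def <;> ring
  have hbc_sq : bc ^ 2 = -1 :=
    sq_eq_neg_one_of_re_eq_zero (by rw [hbc]) (by rw [normSq_def', hbc]; linear_combination hb)
  have hhc_sq : hc' ^ 2 = -1 :=
    sq_eq_neg_one_of_re_eq_zero (by rw [hhc]) (by rw [normSq_def', hhc]; norm_num)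
  have hnormSq : normSq w = 2 * (1+κ^2) * (1+b₃) := by
    rw [normSq_def', hw_def]
    linear_combination (1 + κ^2) * hb
  have hw0 : w ≠ 0 := by
    have : 1 + b₃ ≠ 0 := fun h => hb₃ (by linarith)
    rw [← normSq_ne_zero, hnormSq]
    positivity
  rw [← hnormSq, normSq_eq_norm_mul_self, sqrt_mul_self (norm_nonneg w)] at hq
  subst hq
  exact ⟨norm_smul_inv_norm hw0,
    ((hw ▸ semiconjBy_one_sub_smul_mul_add hbc_sq hhc_sq κ).smul_left ‖w‖⁻¹).eq,
    by linear_combination hb⟩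

theorem stmt18 (b₁ b₂ b₃ : ℝ) (hb : b₁^2 + b₂^2 + b₃^2 = 1) (hb₃ : b₃ ≠ -1)
    (p₀ p₁ p₂ p₃ : ℝ) (p : Quaternion ℝ) (hp : p = ⟨p₀, p₁, p₂, p₃⟩) (hpn : ‖p‖ = 1)
    (hden : b₁*p₁ + b₂*p₂ + (1+b₃)*p₃ ≠ 0)
    (κ : ℝ)
    (hκ : κ = ((1+b₃)*p₀ - b₁*p₂ + b₂*p₁) / (b₁*p₁ + b₂*p₂ + (1+b₃)*p₃))
    (bc hc' : Quaternion ℝ)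
    (hbc : bc = ⟨0, b₁, b₂, b₃⟩) (hhc : hc' = ⟨0, 0, 0, 1⟩)
    (q : Quaternion ℝ)
    (hq : q = (sqrt (2 * (1+κ^2) * (1+b₃)))⁻¹ •
      (⟨κ*(1+b₃), κ*b₂ + b₁, -(κ*b₁) + b₂, 1+b₃⟩ : Quaternion ℝ)) :
    ‖q‖ = 1 ∧ q * bc = hc' * q ∧ (1+b₃)^2 + b₁^2 + b₂^2 = 2*(1+b₃) :=
  stmt18_general b₁ b₂ b₃ hb hb₃ κ bc hc' hbc hhc q hq
end

section
/- In the z-axis reference case (h = (0,0,1), unit vector b with b₃ ≠ −1, unit quaternion p with β = b₁p₁ + b₂p₂ + (1+b₃)p₃ ≠ 0, κ and q as in the closed-form estimate q = (κ(1+b₃), κb₂+b₁, −κb₁+b₂, 1+b₃)/√(2(1+κ²)(1+b₃))), the correction quaternion q ⊗ p⁻¹ has zero third vector component: the component of Im(q ⊗ p⁻¹) along (0,0,1) vanishes. -/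
/-! Up to the scalar factor `1 / √(2(1+κ²)(1+b₃))`, the `k`-component of `q ⊗ p⁻¹` is
`ν - κ β`, where `ν = (1+b₃)p₀ - b₁p₂ + b₂p₁` and `β = b₁p₁ + b₂p₂ + (1+b₃)p₃`; it vanishes
because `κ = ν / β`. -/

open Real

theorem Quaternion.imK_mul_star {R : Type*} [CommRing R] (a p : Quaternion R) :
    (a * star p).imK = a.imK * p.re - a.re * p.imK + a.imJ * p.imI - a.imI * p.imJ := by
  simp only [Quaternion.imK_mul, Quaternion.re_star, Quaternion.imI_star, Quaternion.imJ_star,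
    Quaternion.imK_star]
  ring

theorem stmt19_general (b₁ b₂ b₃ : ℝ)
    (p₀ p₁ p₂ p₃ : ℝ) (p : Quaternion ℝ) (hp : p = ⟨p₀, p₁, p₂, p₃⟩)
    (hden : b₁*p₁ + b₂*p₂ + (1+b₃)*p₃ ≠ 0)
    (κ : ℝ)
    (hκ : κ = ((1+b₃)*p₀ - b₁*p₂ + b₂*p₁) / (b₁*p₁ + b₂*p₂ + (1+b₃)*p₃))
    (q : Quaternion ℝ)
    (hq : q = (sqrt (2 * (1+κ^2) * (1+b₃)))⁻¹ •
      (⟨κ*(1+b₃), κ*b₂ + b₁, -(κ*b₁) + b₂, 1+b₃⟩ : Quaternion ℝ)) :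
    (q * star p).imK = 0 := by
  have hκβ : κ * (b₁*p₁ + b₂*p₂ + (1+b₃)*p₃) = (1+b₃)*p₀ - b₁*p₂ + b₂*p₁ := by
    rw [hκ]; exact div_mul_cancel₀ _ hden
  subst hq hp
  simp only [QuaternionAlgebra.smul_mk, smul_eq_mul]
  -- the anonymous constructor elaborates at type `ℍ[ℝ,-1,0,-1]`, hence `erw`
  erw [Quaternion.imK_mul_star]
  linear_combination -(√(2 * (1 + κ ^ 2) * (1 + b₃)))⁻¹ * hκβ

theorem stmt19 (b₁ b₂ b₃ : ℝ) (hb : b₁^2 + b₂^2 + b₃^2 = 1) (hb₃ : b₃ ≠ -1)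
    (p₀ p₁ p₂ p₃ : ℝ) (p : Quaternion ℝ) (hp : p = ⟨p₀, p₁, p₂, p₃⟩) (hpn : ‖p‖ = 1)
    (hden : b₁*p₁ + b₂*p₂ + (1+b₃)*p₃ ≠ 0)
    (κ : ℝ)
    (hκ : κ = ((1+b₃)*p₀ - b₁*p₂ + b₂*p₁) / (b₁*p₁ + b₂*p₂ + (1+b₃)*p₃))
    (q : Quaternion ℝ)
    (hq : q = (sqrt (2 * (1+κ^2) * (1+b₃)))⁻¹ •
      (⟨κ*(1+b₃), κ*b₂ + b₁, -(κ*b₁) + b₂, 1+b₃⟩ : Quaternion ℝ)) :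
    (q * star p).imK = 0 :=
  stmt19_general b₁ b₂ b₃ p₀ p₁ p₂ p₃ p hp hden κ hκ q hq
end
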